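/- arXiv:0709.4643 — 3 statements merged into one kernel-verified Lean document; each statement's English description precedes it below -/
import Mathlib

section
/- Suppose T₀/T₁ is an irrational number and there exists ξ ∈ x̃₀ such that the function t ↦ φ(t, ξ) is not constant. Then there do not exist T > 0, ε̂ > 0, w₀ ∈ [0, T₀] and a family (x_ε) for ε ∈ (0, ε̂) such that each x_ε : ℝ → ℝ² is a T-periodic solution of ẋ = ψ(x) + ε φ(t, x) and x_ε(t) → x₀(t + w₀) for every t ∈ ℝ as ε → 0⁺. (Theorem 4) -/
/-!
As a pointwise limit of `T`-periodic functions, `x₀ (· + w₀)` is `T`-periodic, so `T` is a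
nonzero multiple of the least period `T₀` and `T / T₁` is irrational. Comparing the derivatives
of the `T`-periodic solution `x ε` at `t` and `t + T` gives `φ (t + T) (x ε t) = φ t (x ε t)`,
and letting `ε → 0⁺` the same holds with `x₀ (t + w₀)` in place of `x ε t`. For `ξ = x₀ s`,
the function `t ↦ φ t ξ` is therefore constant on `s - w₀ + ℤ T + ℤ T₁`, which is dense.
-/

open Filter Topology Function Set

theorem Function.Periodic.of_tendsto {ι α β : Type*} [Add α] [TopologicalSpace β] [T2Space β]
    {l : Filter ι} [l.NeBot] {F : ι → α → β} {f : α → β} {c : α}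
    (hF : ∀ᶠ i in l, Periodic (F i) c) (hlim : ∀ x, Tendsto (fun i => F i x) l (𝓝 (f x))) :
    Periodic f c := fun x =>
  tendsto_nhds_unique_of_eventuallyEq (hlim (x + c)) (hlim x) (hF.mono fun _ hi => hi x)

theorem Function.Periodic.exists_zsmul_eq_of_forall_le {α β : Type*} [AddCommGroup α]
    [LinearOrder α] [IsOrderedAddMonoid α] [Archimedean α] {f : α → β} {c T : α} (hc : 0 < c)
    (hfc : Periodic f c) (hleast : ∀ p, 0 < p → Periodic f p → c ≤ p) (hfT : Periodic f T) :
    ∃ m : ℤ, m • c = T := by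
  refine ⟨toIcoDiv hc 0 T, ?_⟩
  have hmod := toIcoMod_mem_Ico hc 0 T
  rw [zero_add] at hmod
  have hrem : Periodic f (toIcoMod hc 0 T) := by
    rw [← self_sub_toIcoDiv_zsmul]
    exact hfT.sub_period (hfc.zsmul _)
  have hzero : toIcoMod hc 0 T = 0 :=
    hmod.1.eq_or_lt.elim Eq.symm fun hpos => absurd (hleast _ hpos hrem) (not_le.2 hmod.2)
  rw [← sub_eq_zero, ← neg_sub, self_sub_toIcoDiv_zsmul, hzero, neg_zero]

theorem Function.Periodic.hasDerivAt_unique_add {𝕜 F : Type*} [NontriviallyNormedField 𝕜]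
    [NormedAddCommGroup F] [NormedSpace 𝕜 F] {x : 𝕜 → F} {T t : 𝕜} {a b : F}
    (hx : Periodic x T) (ha : HasDerivAt x a t) (hb : HasDerivAt x b (t + T)) : b = a := by
  have hb' := hb.comp_add_const t T
  rw [show (fun s => x (s + T)) = x from funext hx] at hb'
  exact hb'.unique ha

theorem apply_add_period_eq_of_periodic_solution {E : Type*} [NormedAddCommGroup E]
    [NormedSpace ℝ E] {ψ : E → E} {φ : ℝ → E → E} {x : ℝ → E} {ε T : ℝ} (hε : ε ≠ 0)
    (hx : ∀ t, HasDerivAt x (ψ (x t) + ε • φ t (x t)) t) (hper : Periodic x T) (t : ℝ) :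
    φ (t + T) (x t) = φ t (x t) := by
  have h := hper.hasDerivAt_unique_add (hx t) (hx (t + T))
  rw [hper t] at h
  exact smul_right_injective E hε (add_left_cancel h)

theorem Function.Periodic.eq_of_irrational {X : Type*} [TopologicalSpace X] [T2Space X]
    {g : ℝ → X} {T T₁ a : ℝ} (hg : Continuous g) (hT₁ : Periodic g T₁)
    (hirr : Irrational (T / T₁)) (hT : ∀ n : ℤ, g (a + n • T) = g a) (t : ℝ) : g t = g a := by
  have hconst : (fun s => g (a + s)) = fun _ => g a := by
    refine (hg.comp (continuous_const_add a)).ext_on (dense_addSubgroupClosure_pair_iff.2 hirr)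
      continuous_const fun s hs => ?_
    obtain ⟨m, n, rfl⟩ := AddSubgroup.mem_closure_pair.1 hs
    change g (a + (m • T + n • T₁)) = g a
    rw [← add_assoc, hT₁.zsmul n, hT]
  simpa using congrFun hconst (t - a)

theorem no_periodic_solutions_of_irrational_ratio_general
    (ψ : EuclideanSpace ℝ (Fin 2) → EuclideanSpace ℝ (Fin 2))
    (T₁ : ℝ)
    (φ : ℝ → EuclideanSpace ℝ (Fin 2) → EuclideanSpace ℝ (Fin 2))
    (hφcont : Continuous fun p : ℝ × EuclideanSpace ℝ (Fin 2) => φ p.1 p.2)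
    (hφper : ∀ t ξ, φ (t + T₁) ξ = φ t ξ)
    (T₀ : ℝ) (hT₀ : 0 < T₀)
    (x₀ : ℝ → EuclideanSpace ℝ (Fin 2))
    (hx₀per : Function.Periodic x₀ T₀)
    (hx₀least : ∀ p : ℝ, 0 < p → Function.Periodic x₀ p → T₀ ≤ p)
    (hirr : Irrational (T₀ / T₁))
    (ξ : EuclideanSpace ℝ (Fin 2)) (hξ : ξ ∈ x₀ '' Set.Icc 0 T₀)
    (hφnonconst : ¬ ∃ c, ∀ t : ℝ, φ t ξ = c) :
    ¬ ∃ (T εhat : ℝ) (w₀ : ℝ) (x : ℝ → ℝ → EuclideanSpace ℝ (Fin 2)),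
      0 < T ∧ 0 < εhat ∧ w₀ ∈ Set.Icc 0 T₀ ∧
      (∀ ε ∈ Set.Ioo 0 εhat, ∀ t : ℝ,
        HasDerivAt (x ε) (ψ (x ε t) + ε • φ t (x ε t)) t) ∧
      (∀ ε ∈ Set.Ioo 0 εhat, Function.Periodic (x ε) T) ∧
      (∀ t : ℝ, Filter.Tendsto (fun ε => x ε t)
        (nhdsWithin 0 (Set.Ioi 0)) (nhds (x₀ (t + w₀)))) := by
  rintro ⟨T, εhat, w₀, x, hT, hεhat, -, hsol, hper, hlim⟩
  have hsmall : ∀ᶠ ε in 𝓝[>] (0 : ℝ), ε ∈ Ioo 0 εhat := Ioo_mem_nhdsGT hεhat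
  have hx₀T : Periodic x₀ T := by
    simpa using (Periodic.of_tendsto (hsmall.mono hper) hlim).add_const (-w₀)
  obtain ⟨m, rfl⟩ := hx₀per.exists_zsmul_eq_of_forall_le hT₀ hx₀least hx₀T
  have hirrT : Irrational (m • T₀ / T₁) := by
    rw [zsmul_eq_mul, mul_div_assoc]
    exact hirr.intCast_mul (by rintro rfl; simp at hT)
  have hcont (τ : ℝ) : Continuous (φ τ) := hφcont.comp (continuous_const.prodMk continuous_id)
  have hφT (t : ℝ) : φ (t + m • T₀) (x₀ (t + w₀)) = φ t (x₀ (t + w₀)) :=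
    tendsto_nhds_unique_of_eventuallyEq (((hcont _).tendsto _).comp (hlim t))
      (((hcont t).tendsto _).comp (hlim t)) <| hsmall.mono fun ε hε =>
        apply_add_period_eq_of_periodic_solution hε.1.ne' (hsol ε hε) (hper ε hε) t
  obtain ⟨s, -, rfl⟩ := hξ
  refine hφnonconst ⟨φ (s - w₀) (x₀ s), Periodic.eq_of_irrational
    (hφcont.comp (continuous_id.prodMk continuous_const)) (fun t => hφper t _) hirrT fun n => ?_⟩
  have hstep : Periodic (fun n : ℤ => φ (s - w₀ + n • m • T₀) (x₀ s)) 1 := fun n => by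
    have := hφT (s - w₀ + n • m • T₀)
    rw [show s - w₀ + n • m • T₀ + w₀ = s + n • m • T₀ by abel, (hx₀T.zsmul n) s] at this
    dsimp only
    rwa [add_zsmul, one_zsmul, ← add_assoc]
  simpa using hstep.zsmul_eq n

/-- **Theorem 4.**  Let `ψ : ℝ² → ℝ²` be twice continuously differentiable, let
`φ : ℝ × ℝ² → ℝ²` be continuous and `T₁`-periodic in its first variable, and let
`x₀` be a periodic solution of `ẋ = ψ(x)` of least period `T₀ > 0`.
Suppose `T₀ / T₁` is irrational and there is `ξ` on the trajectory of `x₀` such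
that `t ↦ φ t ξ` is not constant.  Then there do not exist `T > 0`, `ε̂ > 0`,
`w₀ ∈ [0, T₀]` and a family `x ε` (`ε ∈ (0, ε̂)`) of `T`-periodic solutions of
`ẋ = ψ(x) + ε φ(t, x)` with `x ε t → x₀ (t + w₀)` as `ε → 0⁺`. -/
theorem no_periodic_solutions_of_irrational_ratio
    (ψ : EuclideanSpace ℝ (Fin 2) → EuclideanSpace ℝ (Fin 2))
    (hψ : ContDiff ℝ 2 ψ)
    (T₁ : ℝ) (hT₁ : 0 < T₁)
    (φ : ℝ → EuclideanSpace ℝ (Fin 2) → EuclideanSpace ℝ (Fin 2))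
    (hφcont : Continuous fun p : ℝ × EuclideanSpace ℝ (Fin 2) => φ p.1 p.2)
    (hφper : ∀ t ξ, φ (t + T₁) ξ = φ t ξ)
    (T₀ : ℝ) (hT₀ : 0 < T₀)
    (x₀ : ℝ → EuclideanSpace ℝ (Fin 2))
    (hx₀sol : ∀ t : ℝ, HasDerivAt x₀ (ψ (x₀ t)) t)
    (hx₀per : Function.Periodic x₀ T₀)
    (hx₀least : ∀ p : ℝ, 0 < p → Function.Periodic x₀ p → T₀ ≤ p)
    (hirr : Irrational (T₀ / T₁))
    (ξ : EuclideanSpace ℝ (Fin 2)) (hξ : ξ ∈ x₀ '' Set.Icc 0 T₀)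
    (hφnonconst : ¬ ∃ c, ∀ t : ℝ, φ t ξ = c) :
    ¬ ∃ (T εhat : ℝ) (w₀ : ℝ) (x : ℝ → ℝ → EuclideanSpace ℝ (Fin 2)),
      0 < T ∧ 0 < εhat ∧ w₀ ∈ Set.Icc 0 T₀ ∧
      (∀ ε ∈ Set.Ioo 0 εhat, ∀ t : ℝ,
        HasDerivAt (x ε) (ψ (x ε t) + ε • φ t (x ε t)) t) ∧
      (∀ ε ∈ Set.Ioo 0 εhat, Function.Periodic (x ε) T) ∧
      (∀ t : ℝ, Filter.Tendsto (fun ε => x ε t)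
        (nhdsWithin 0 (Set.Ioi 0)) (nhds (x₀ (t + w₀)))) :=
  no_periodic_solutions_of_irrational_ratio_general ψ T₁ φ hφcont hφper T₀ hT₀ x₀ hx₀per hx₀least
    hirr ξ hξ hφnonconst
end

section
/- Assume ⟨F(s, θ), f(θ)⟩ ≠ 0 for all s ∈ ℝ and all θ ∈ [0, T₀]. Then η(T, s, x₀(θ)) − η(0, s, x₀(θ)) ≠ 0 for every s ∈ [0, T] and every θ ∈ [0, T₀], i.e., condition (A₂) of Theorem 1 holds on the trajectory x̃₀. (nonvanishing part of Theorem 3) -/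
open scoped RealInnerProductSpace

noncomputable def columnsMatrix (a b : EuclideanSpace ℝ (Fin 2)) :
    Matrix (Fin 2) (Fin 2) ℝ := !![a 0, b 0; a 1, b 1]

/-!
Suppose `η(T,s,x₀(θ)) = η(0,s,x₀(θ))`. The flow through `x₀(θ)` is `t ↦ x₀(t+θ)`, so
`z(u) = η(u-θ, s, x₀(θ))` solves `z' = ψ'(x₀(u)) z + φ(u-θ, x₀(u))`, an equation with `T`-periodic
coefficients. Then `z(·+T) - z` solves the homogeneous equation and vanishes at `θ`, hence
everywhere, so `z` vanishes at `s+θ` (where `η(s,s,·) = 0`) and at `s+θ+T`. As `ẋ₀` and `y` form a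
fundamental system of the homogeneous equation, variation of constants shows that a solution
vanishing at `a` and `b` has `∫_a^b (ẋ₀ y)⁻¹ φ(τ-θ, x₀(τ)) dτ = 0`; for `[a,b] = [s+θ, s+θ+T]`
this integral is `F(s+θ+T, θ)`, contradicting `⟨F(s+θ+T, θ), f(θ)⟩ ≠ 0`.
-/

open Filter Topology Function Matrix

section ODEUniqueness

variable {E : Type*} [NormedAddCommGroup E] [NormedSpace ℝ E]

theorem ODE_solution_unique_univ_of_locallyLipschitz {v : ℝ → E → E}
    (hv : ∀ t₀ x, ∃ K, ∃ s ∈ 𝓝 x, ∀ᶠ t in 𝓝 t₀, LipschitzOnWith K (v t) s)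
    {f g : ℝ → E} (hf : ∀ t, HasDerivAt f (v t (f t)) t) (hg : ∀ t, HasDerivAt g (v t (g t)) t)
    {t₀ : ℝ} (heq : f t₀ = g t₀) : f = g := by
  have hfc : Continuous f := continuous_iff_continuousAt.2 fun t => (hf t).continuousAt
  have hgc : Continuous g := continuous_iff_continuousAt.2 fun t => (hg t).continuousAt
  suffices hclopen : IsClopen {t | f t = g t} by
    funext t
    exact Set.eq_univ_iff_forall.1 (hclopen.eq_univ ⟨t₀, heq⟩) t
  refine ⟨isClosed_eq hfc hgc, isOpen_iff_mem_nhds.2 fun t₁ (h₁ : f t₁ = g t₁) => ?_⟩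
  obtain ⟨K, s, hs, hvK⟩ := hv t₁ (f t₁)
  have hfs : ∀ᶠ t in 𝓝 t₁, f t ∈ s := hfc.continuousAt hs
  have hgs : ∀ᶠ t in 𝓝 t₁, g t ∈ s := hgc.continuousAt (h₁ ▸ hs)
  exact ODE_solution_unique_of_eventually hvK (hfs.mono fun t ht => ⟨hf t, ht⟩)
    (hgs.mono fun t ht => ⟨hg t, ht⟩) h₁

theorem ODE_solution_unique_univ_of_contDiff {ψ : E → E} (hψ : ContDiff ℝ 1 ψ)
    {f g : ℝ → E} (hf : ∀ t, HasDerivAt f (ψ (f t)) t) (hg : ∀ t, HasDerivAt g (ψ (g t)) t)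
    {t₀ : ℝ} (heq : f t₀ = g t₀) : f = g :=
  ODE_solution_unique_univ_of_locallyLipschitz (v := fun _ => ψ)
    (fun _ x =>
      let ⟨K, s, hs, hK⟩ := hψ.contDiffAt.exists_lipschitzOnWith (x := x)
      ⟨K, s, hs, Eventually.of_forall fun _ => hK⟩)
    hf hg heq

theorem eq_zero_of_hasDerivAt_clm_apply {A : ℝ → E →L[ℝ] E} (hA : Continuous A)
    {w : ℝ → E} (hw : ∀ t, HasDerivAt w (A t (w t)) t) {t₀ : ℝ} (h₀ : w t₀ = 0) : w = 0 := by
  refine ODE_solution_unique_univ_of_locallyLipschitz (v := fun t x => A t x)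
    (fun t₀ _ => ⟨‖A t₀‖₊ + 1, Set.univ, univ_mem, ?_⟩) hw
    (fun t => by simp) h₀
  filter_upwards [hA.continuousAt.nnnorm.eventually_lt_const (lt_add_one _)] with t ht
  exact ((A t).lipschitz.weaken ht.le).lipschitzOnWith

theorem periodic_of_hasDerivAt_clm_apply_add {A : ℝ → E →L[ℝ] E} {h z : ℝ → E} {T : ℝ}
    (hA : Continuous A) (hAT : Periodic A T) (hhT : Periodic h T)
    (hz : ∀ t, HasDerivAt z (A t (z t) + h t) t) {t₀ : ℝ} (ht₀ : z (t₀ + T) = z t₀) :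
    Periodic z T := by
  have hw : ∀ t, HasDerivAt (fun u => z (u + T) - z u) (A t (z (t + T) - z t)) t := fun t => by
    refine (((hz (t + T)).comp_add_const t T).sub (hz t)).congr_deriv ?_
    rw [hAT t, hhT t, map_sub]
    abel
  intro t
  exact sub_eq_zero.1 (congrFun (eq_zero_of_hasDerivAt_clm_apply hA hw (sub_eq_zero.2 ht₀)) t)

end ODEUniqueness

theorem Function.Periodic.mul_of_div_eq {α : Type*} {g : ℝ → α} {T₀ T₁ : ℝ} {l k : ℕ}
    (hg : Periodic g T₁) (hT₁ : T₁ ≠ 0) (hk : k ≠ 0) (hratio : T₀ / T₁ = l / k) :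
    Periodic g (k * l * T₀) := by
  rw [div_eq_div_iff hT₁ (Nat.cast_ne_zero.2 hk)] at hratio
  have hT : (k : ℝ) * l * T₀ = (l * l : ℕ) * T₁ := by
    push_cast
    linear_combination (l : ℝ) * hratio
  exact hT ▸ hg.nat_mul _

theorem HasDerivAt.smul_add_smul_of_clm_apply {E : Type*} [NormedAddCommGroup E]
    [NormedSpace ℝ E] {A : E →L[ℝ] E} {α β : ℝ → ℝ} {α' β' t : ℝ} {p q : ℝ → E}
    (hα : HasDerivAt α α' t) (hβ : HasDerivAt β β' t)
    (hp : HasDerivAt p (A (p t)) t) (hq : HasDerivAt q (A (q t)) t) :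
    HasDerivAt (fun u => α u • p u + β u • q u)
      (A (α t • p t + β t • q t) + (α' • p t + β' • q t)) t := by
  refine ((hα.smul hp).add (hβ.smul hq)).congr_deriv ?_
  rw [map_add, map_smul, map_smul]
  abel

local notation "ℝ²" => EuclideanSpace ℝ (Fin 2)

theorem columnsMatrix_mulVec (a b : ℝ²) (v : Fin 2 → ℝ) :
    WithLp.toLp 2 (columnsMatrix a b *ᵥ v) = v 0 • a + v 1 • b := by
  ext i
  fin_cases i <;> simp [columnsMatrix, mulVec, dotProduct, Fin.sum_univ_two, mul_comm]

theorem continuous_columnsMatrix {X : Type*} [TopologicalSpace X] {p q : X → ℝ²}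
    (hp : Continuous p) (hq : Continuous q) : Continuous fun x => columnsMatrix (p x) (q x) := by
  refine continuous_matrix fun i j => ?_
  fin_cases i <;> fin_cases j <;> simp [columnsMatrix] <;> fun_prop

theorem continuous_columnsMatrix_inv_mulVec {X : Type*} [TopologicalSpace X] {p q h : X → ℝ²}
    (hp : Continuous p) (hq : Continuous q) (hdet : ∀ x, (columnsMatrix (p x) (q x)).det ≠ 0)
    (hh : Continuous h) :
    Continuous fun x => WithLp.toLp 2 ((columnsMatrix (p x) (q x))⁻¹ *ᵥ h x) := by
  have hM := continuous_columnsMatrix hp hq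
  have hinv : Continuous fun x => (columnsMatrix (p x) (q x))⁻¹ := by
    simp only [Matrix.inv_def, Ring.inverse_eq_inv']
    exact (hM.matrix_det.inv₀ hdet).smul hM.matrix_adjugate
  exact (PiLp.continuous_toLp 2 _).comp (hinv.matrix_mulVec ((PiLp.continuous_ofLp 2 _).comp hh))

theorem integral_columnsMatrix_inv_mulVec_eq_zero {A : ℝ → ℝ² →L[ℝ] ℝ²} (hA : Continuous A)
    {p q h z : ℝ → ℝ²} (hp : ∀ t, HasDerivAt p (A t (p t)) t)
    (hq : ∀ t, HasDerivAt q (A t (q t)) t) (hdet : ∀ t, (columnsMatrix (p t) (q t)).det ≠ 0)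
    (hh : Continuous h) (hz : ∀ t, HasDerivAt z (A t (z t) + h t) t) {a b : ℝ}
    (ha : z a = 0) (hb : z b = 0) :
    ∫ t in a..b, WithLp.toLp 2 ((columnsMatrix (p t) (q t))⁻¹ *ᵥ h t) = 0 := by
  set G : ℝ → ℝ² := fun t => WithLp.toLp 2 ((columnsMatrix (p t) (q t))⁻¹ *ᵥ h t)
  have hG : Continuous G := continuous_columnsMatrix_inv_mulVec
    (continuous_iff_continuousAt.2 fun t => (hp t).continuousAt)
    (continuous_iff_continuousAt.2 fun t => (hq t).continuousAt) hdet hh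
  set V : ℝ → ℝ² := fun t => ∫ u in a..t, G u
  have hV : ∀ t i, HasDerivAt (fun u => V u i) (G t i) t := fun t i => by
    exact (EuclideanSpace.proj i).hasFDerivAt.comp_hasDerivAt t
      (hG.integral_hasStrictDerivAt a t).hasDerivAt
  have hG_comb : ∀ t, G t 0 • p t + G t 1 • q t = h t := fun t => by
    rw [← columnsMatrix_mulVec, WithLp.ofLp_toLp, mulVec_mulVec,
      mul_nonsing_inv _ (isUnit_iff_ne_zero.2 (hdet t)), one_mulVec, WithLp.toLp_ofLp]
  set g : ℝ → ℝ² := fun t => V t 0 • p t + V t 1 • q t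
  have hg : ∀ t, HasDerivAt g (A t (g t) + h t) t := fun t => by
    simpa only [hG_comb] using (hV t 0).smul_add_smul_of_clm_apply (hV t 1) (hp t) (hq t)
  have hzg : z = g := by
    refine sub_eq_zero.1 (eq_zero_of_hasDerivAt_clm_apply hA (w := z - g) (t₀ := a)
      (fun t => ((hz t).sub (hg t)).congr_deriv ?_) ?_)
    · simp only [Pi.sub_apply, map_sub]
      abel
    · simp [ha, g, V]
  have hVb : WithLp.toLp 2 (columnsMatrix (p b) (q b) *ᵥ V b) = 0 := by
    rw [columnsMatrix_mulVec, ← hb, hzg]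
  by_contra hne
  refine hdet b (exists_mulVec_eq_zero_iff.1 ⟨V b, ?_, congrArg WithLp.ofLp hVb⟩)
  simpa [V] using hne

theorem eta_difference_nonvanishing_on_cycle_general
    (ψ : EuclideanSpace ℝ (Fin 2) → EuclideanSpace ℝ (Fin 2))
    (hψ : ContDiff ℝ 2 ψ)
    (T₁ : ℝ) (hT₁ : 0 < T₁)
    (φ : ℝ → EuclideanSpace ℝ (Fin 2) → EuclideanSpace ℝ (Fin 2))
    (hφcont : Continuous fun p : ℝ × EuclideanSpace ℝ (Fin 2) => φ p.1 p.2)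
    (hφper : ∀ t ξ, φ (t + T₁) ξ = φ t ξ)
    (T₀ : ℝ)
    (x₀ : ℝ → EuclideanSpace ℝ (Fin 2))
    (hx₀sol : ∀ t : ℝ, HasDerivAt x₀ (ψ (x₀ t)) t)
    (hx₀per : Function.Periodic x₀ T₀)
    (l k : ℕ) (hk : Nat.Prime k)
    (hratio : T₀ / T₁ = (l : ℝ) / (k : ℝ))
    (T : ℝ) (hT : T = (k : ℝ) * l * T₀)
    (Ω : ℝ → ℝ → EuclideanSpace ℝ (Fin 2) → EuclideanSpace ℝ (Fin 2))
    (hΩinit : ∀ t₀ ξ, Ω t₀ t₀ ξ = ξ)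
    (hΩsol : ∀ t₀ ξ t, HasDerivAt (fun s => Ω s t₀ ξ) (ψ (Ω t t₀ ξ)) t)
    (η : ℝ → ℝ → EuclideanSpace ℝ (Fin 2) → EuclideanSpace ℝ (Fin 2))
    (hηinit : ∀ s ξ, η s s ξ = 0)
    (hηsol : ∀ s ξ t, HasDerivAt (fun u => η u s ξ)
      (fderiv ℝ ψ (Ω t 0 ξ) (η t s ξ) + φ t (Ω t 0 ξ)) t)
    (y : ℝ → EuclideanSpace ℝ (Fin 2))
    (hysol : ∀ t : ℝ, HasDerivAt y (fderiv ℝ ψ (x₀ t) (y t)) t)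
    (hyindep : ∀ t : ℝ, (columnsMatrix (ψ (x₀ t)) (y t)).det ≠ 0)
    (f : ℝ → EuclideanSpace ℝ (Fin 2))
    (F : ℝ → ℝ → EuclideanSpace ℝ (Fin 2))
    (hF : ∀ s θ : ℝ, F s θ = ∫ τ in (s - T)..s,
      (WithLp.toLp 2 ((columnsMatrix (ψ (x₀ τ)) (y τ))⁻¹.mulVec (φ (τ - θ) (x₀ τ))) :
        EuclideanSpace ℝ (Fin 2)))
    (hB₂ : ∀ s : ℝ, ∀ θ ∈ Set.Icc 0 T₀, ⟪F s θ, f θ⟫ ≠ (0 : ℝ)) :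
    ∀ s ∈ Set.Icc 0 T, ∀ θ ∈ Set.Icc 0 T₀,
      η T s (x₀ θ) - η 0 s (x₀ θ) ≠ 0 := by
  intro s _ θ hθ hη
  have hψ₁ : ContDiff ℝ 1 ψ := hψ.of_le (by norm_num)
  have hx₀c : Continuous x₀ := continuous_iff_continuousAt.2 fun t => (hx₀sol t).continuousAt
  have hA : Continuous fun u => fderiv ℝ ψ (x₀ u) := (hψ₁.continuous_fderiv one_ne_zero).comp hx₀c
  have hx₀T : Periodic x₀ T := by
    rw [hT]
    exact_mod_cast hx₀per.nat_mul (k * l)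
  have hφT : Periodic φ T :=
    hT ▸ Periodic.mul_of_div_eq (fun t => funext (hφper t)) hT₁.ne' hk.ne_zero hratio
  have hflow : ∀ t, Ω t 0 (x₀ θ) = x₀ (t + θ) := congrFun <|
    ODE_solution_unique_univ_of_contDiff hψ₁ (hΩsol 0 (x₀ θ))
      (fun t => (hx₀sol (t + θ)).comp_add_const t θ) (t₀ := 0) (by rw [hΩinit, zero_add])
  set z : ℝ → EuclideanSpace ℝ (Fin 2) := fun u => η (u - θ) s (x₀ θ)
  have hz : ∀ u, HasDerivAt z (fderiv ℝ ψ (x₀ u) (z u) + φ (u - θ) (x₀ u)) u := fun u => by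
    simpa only [hflow, sub_add_cancel] using (hηsol s (x₀ θ) (u - θ)).comp_sub_const u θ
  have hzT : Periodic z T :=
    periodic_of_hasDerivAt_clm_apply_add hA (hx₀T.comp _)
      (fun u => by simp only [add_sub_right_comm u T θ, hφT (u - θ), hx₀T u]) hz (t₀ := θ)
      (by simpa [z] using sub_eq_zero.1 hη)
  have hzs : z (s + θ) = 0 := by simp [z, hηinit]
  have hp : ∀ u, HasDerivAt (fun u => ψ (x₀ u)) (fderiv ℝ ψ (x₀ u) (ψ (x₀ u))) u := fun u =>
    ((hψ₁.differentiable one_ne_zero) (x₀ u)).hasFDerivAt.comp_hasDerivAt u (hx₀sol u)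
  have hF_zero : F (s + θ + T) θ = 0 := by
    rw [hF, add_sub_cancel_right]
    exact integral_columnsMatrix_inv_mulVec_eq_zero hA hp hysol hyindep
      (hφcont.comp ((continuous_sub_right θ).prodMk hx₀c)) hz hzs (by rw [hzT, hzs])
  exact hB₂ _ θ hθ (by rw [hF_zero, inner_zero_left])

/-- **Nonvanishing part of Theorem 3.**  With `x₀` a periodic solution of the
planar system `ẋ = ψ(x)` of least period `T₀`, `y` a solution of the linearized
system `ẏ = ψ'(x₀(t)) y` linearly independent of `ẋ₀`, `T = k l T₀`, and
`F(s,θ) = ∫_{s-T}^{s} (ẋ₀(τ) y(τ))⁻¹ φ(τ-θ, x₀(τ)) dτ`:  if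
`⟨F(s,θ), f(θ)⟩ ≠ 0` for all `s ∈ ℝ` and `θ ∈ [0,T₀]`, then
`η(T,s,x₀(θ)) − η(0,s,x₀(θ)) ≠ 0` for all `s ∈ [0,T]`, `θ ∈ [0,T₀]`. -/
theorem eta_difference_nonvanishing_on_cycle
    (ψ : EuclideanSpace ℝ (Fin 2) → EuclideanSpace ℝ (Fin 2))
    (hψ : ContDiff ℝ 2 ψ)
    (T₁ : ℝ) (hT₁ : 0 < T₁)
    (φ : ℝ → EuclideanSpace ℝ (Fin 2) → EuclideanSpace ℝ (Fin 2))
    (hφcont : Continuous fun p : ℝ × EuclideanSpace ℝ (Fin 2) => φ p.1 p.2)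
    (hφper : ∀ t ξ, φ (t + T₁) ξ = φ t ξ)
    (T₀ : ℝ) (hT₀ : 0 < T₀)
    (x₀ : ℝ → EuclideanSpace ℝ (Fin 2))
    (hx₀sol : ∀ t : ℝ, HasDerivAt x₀ (ψ (x₀ t)) t)
    (hx₀per : Function.Periodic x₀ T₀)
    (hx₀least : ∀ p : ℝ, 0 < p → Function.Periodic x₀ p → T₀ ≤ p)
    (l k : ℕ) (hl : Nat.Prime l) (hk : Nat.Prime k)
    (hratio : T₀ / T₁ = (l : ℝ) / (k : ℝ))
    (T : ℝ) (hT : T = (k : ℝ) * l * T₀)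
    (Ω : ℝ → ℝ → EuclideanSpace ℝ (Fin 2) → EuclideanSpace ℝ (Fin 2))
    (hΩinit : ∀ t₀ ξ, Ω t₀ t₀ ξ = ξ)
    (hΩsol : ∀ t₀ ξ t, HasDerivAt (fun s => Ω s t₀ ξ) (ψ (Ω t t₀ ξ)) t)
    (η : ℝ → ℝ → EuclideanSpace ℝ (Fin 2) → EuclideanSpace ℝ (Fin 2))
    (hηinit : ∀ s ξ, η s s ξ = 0)
    (hηsol : ∀ s ξ t, HasDerivAt (fun u => η u s ξ)
      (fderiv ℝ ψ (Ω t 0 ξ) (η t s ξ) + φ t (Ω t 0 ξ)) t)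
    (y : ℝ → EuclideanSpace ℝ (Fin 2))
    (hysol : ∀ t : ℝ, HasDerivAt y (fderiv ℝ ψ (x₀ t) (y t)) t)
    (hyindep : ∀ t : ℝ, (columnsMatrix (ψ (x₀ t)) (y t)).det ≠ 0)
    (f : ℝ → EuclideanSpace ℝ (Fin 2))
    (F : ℝ → ℝ → EuclideanSpace ℝ (Fin 2))
    (hF : ∀ s θ : ℝ, F s θ = ∫ τ in (s - T)..s,
      (WithLp.toLp 2 ((columnsMatrix (ψ (x₀ τ)) (y τ))⁻¹.mulVec (φ (τ - θ) (x₀ τ))) :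
        EuclideanSpace ℝ (Fin 2)))
    (hB₂ : ∀ s : ℝ, ∀ θ ∈ Set.Icc 0 T₀, ⟪F s θ, f θ⟫ ≠ (0 : ℝ)) :
    ∀ s ∈ Set.Icc 0 T, ∀ θ ∈ Set.Icc 0 T₀,
      η T s (x₀ θ) - η 0 s (x₀ θ) ≠ 0 :=
  eta_difference_nonvanishing_on_cycle_general ψ hψ T₁ hT₁ φ hφcont hφper T₀ x₀ hx₀sol hx₀per l k hk
    hratio T hT Ω hΩinit hΩsol η hηinit hηsol y hysol hyindep f F hF hB₂
end

section
/- Let g : ℝ → ℝ² be continuous, and suppose g is periodic with period a > 0 and also periodic with period b > 0, where a/b is an irrational number. Then g is constant. (key step in the proof of Theorem 4) -/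
/-! The periods of `g` contain the subgroup of `ℝ` generated by `a` and `b`, which is dense
because `a / b` is irrational. A continuous function that agrees with `g 0` on a dense set is
constant. -/

theorem Function.Periodic.of_mem_addSubgroupClosure_pair {α β : Type*} [AddCommGroup α]
    {f : α → β} {a b p : α} (ha : Function.Periodic f a) (hb : Function.Periodic f b)
    (hp : p ∈ AddSubgroup.closure {a, b}) : Function.Periodic f p := by
  obtain ⟨m, n, rfl⟩ := AddSubgroup.mem_closure_pair.mp hp
  exact (ha.zsmul m).add_period (hb.zsmul n)

theorem Continuous.eq_apply_zero_of_dense_periods {α β : Type*} [AddZeroClass α]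
    [TopologicalSpace α] [TopologicalSpace β] [T2Space β] {f : α → β} (hf : Continuous f)
    (hd : Dense {p | Function.Periodic f p}) (t : α) : f t = f 0 :=
  congrFun (hf.ext_on hd continuous_const fun p hp => by simpa using hp 0) t

theorem continuous_two_incommensurable_periods_constant_general
    (g : ℝ → EuclideanSpace ℝ (Fin 2)) (hg : Continuous g)
    (a b : ℝ)
    (hga : Function.Periodic g a) (hgb : Function.Periodic g b)
    (hirr : Irrational (a / b)) :
    ∃ c, ∀ t : ℝ, g t = c := by
  have hdense : Dense {p | Function.Periodic g p} :=
    (dense_addSubgroupClosure_pair_iff.mpr hirr).mono fun _ hp =>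
      hga.of_mem_addSubgroupClosure_pair hgb hp
  exact ⟨g 0, hg.eq_apply_zero_of_dense_periods hdense⟩

/-- **Key step in the proof of Theorem 4.**  If `g : ℝ → ℝ²` is continuous and
periodic with two periods `a > 0` and `b > 0` whose ratio `a / b` is irrational,
then `g` is constant. -/
theorem continuous_two_incommensurable_periods_constant
    (g : ℝ → EuclideanSpace ℝ (Fin 2)) (hg : Continuous g)
    (a b : ℝ) (ha : 0 < a) (hb : 0 < b)
    (hga : Function.Periodic g a) (hgb : Function.Periodic g b)
    (hirr : Irrational (a / b)) :
    ∃ c, ∀ t : ℝ, g t = c :=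
  continuous_two_incommensurable_periods_constant_general g hg a b hga hgb hirr
end
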